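/- Let s, t be real numbers with t > 0, and let v = (r, c, d), v′ = (r′, c′, d′) be triples of real numbers with c − sr ≠ 0 and B_{s,t}(v, v′) = 0. Let α, β be real numbers and set w = αv + βv′ = (r_w, c_w, d_w). If c_w − s·r_w ≠ 0, then μ_{s,t}(w) = μ_{s,t}(v). That is, on a point of the potential wall W_{v,v′}, the slope μ_{s,t} is constant on the plane spanned by v and v′. -/
import Mathlib


/-- The Bridgeland slope on ℙ² of a triple `(r, c, d)` of real numbers. -/
noncomputable def mu (s t r c d : ℝ) : ℝ :=
  (d - s * c + (s ^ 2 / 2) * r - (t ^ 2 / 2) * r) / (t * (c - s * r))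

/-- On a point of the potential wall `W_{v,v'}`, the slope `μ_{s,t}` is constant on the
plane spanned by `v` and `v'`. -/
theorem slope_constant_on_wall_plane (s t : ℝ) (ht : 0 < t)
    (r c d r' c' d' α β : ℝ) (hv : c - s * r ≠ 0)
    (hB : (s ^ 2 + t ^ 2) * (r * c' - r' * c) - 2 * s * (r * d' - r' * d)
        + 2 * (c * d' - c' * d) = 0)
    (hw : (α * c + β * c') - s * (α * r + β * r') ≠ 0) :
    mu s t (α * r + β * r') (α * c + β * c') (α * d + β * d') = mu s t r c d := by
  unfold mu
  rw [div_eq_div_iff (mul_ne_zero ht.ne' hw) (mul_ne_zero ht.ne' hv)]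
  linear_combination (β * t / 2) * hB
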